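/- L_p-Brunn-Minkowski inequality for chord integrals: if K, L are star bodies in R^n, 0 ≤ i < n, and p ≥ 1, then B_i(K +̌_p L)^{-p/(n-i)} ≥ B_i(K)^{-p/(n-i)} + B_i(L)^{-p/(n-i)}, with equality if and only if K and L have similar chord functions. -/

import Mathlib

open MeasureTheory Metric Filter Set
open scoped ENNReal

noncomputable section

/-- A star body in `ℝⁿ`: a compact set, star-shaped about the origin, whose radial
function (recorded on the unit sphere) is positive and continuous. -/
structure StarBody (n : ℕ) where
  carrier : Set (EuclideanSpace ℝ (Fin n))
  radial : sphere (0 : EuclideanSpace ℝ (Fin n)) 1 → ℝ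
  radial_pos : ∀ u, 0 < radial u
  radial_continuous : Continuous radial
  isCompact : IsCompact carrier
  mem_iff : ∀ x, x ∈ carrier ↔ x = 0 ∨
    ∃ (u : sphere (0 : EuclideanSpace ℝ (Fin n)) 1) (c : ℝ),
      0 ≤ c ∧ c ≤ radial u ∧ x = c • (u : EuclideanSpace ℝ (Fin n))

/-- The half chord `d(K,u) = (ρ(K,u) + ρ(K,-u))/2` of a star body in direction `u`. -/
def StarBody.chord {n : ℕ} (K : StarBody n) (u : sphere (0 : EuclideanSpace ℝ (Fin n)) 1) : ℝ :=
  (K.radial u + K.radial (-u)) / 2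

/-- Spherical (surface-type) measure on the unit sphere of `ℝⁿ`. -/
def sphereMeasure (n : ℕ) : Measure (sphere (0 : EuclideanSpace ℝ (Fin n)) 1) :=
  (volume : Measure (EuclideanSpace ℝ (Fin n))).toSphere

/-- The chord integral `B_i(K) = (1/n) ∫_{S^{n-1}} d(K,u)^{n-i} dS(u)`. -/
def chordIntegral (n i : ℕ) (K : StarBody n) : ℝ :=
  (1 / (n : ℝ)) * ∫ u, K.chord u ^ ((n : ℝ) - i) ∂(sphereMeasure n)

/-- `K` and `L` have similar chord: `d(K,·) = λ d(L,·)` for some `λ > 0`. -/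
def SimilarChord {n : ℕ} (K L : StarBody n) : Prop :=
  ∃ lam : ℝ, 0 < lam ∧ ∀ u, K.chord u = lam * L.chord u


lemma strictConvexOn_rpow_neg {r : ℝ} (hr : 0 < r) :
    StrictConvexOn ℝ (Set.Ioi (0:ℝ)) fun x : ℝ => x ^ (-r) := by
  apply strictConvexOn_of_deriv2_pos (convex_Ioi 0)
  · intro x hx
    exact (Real.continuousAt_rpow_const x (-r) (Or.inl (ne_of_gt hx))).continuousWithinAt
  · intro x hx
    rw [interior_Ioi, mem_Ioi] at hx
    have hev : deriv (fun y : ℝ => y ^ (-r)) =ᶠ[nhds x] fun y : ℝ => -r * y ^ (-r - 1) := by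
      filter_upwards [eventually_ne_nhds (ne_of_gt hx)] with y hy
      exact Real.deriv_rpow_const y (-r)
    have h2 : deriv (deriv (fun y : ℝ => y ^ (-r))) x
        = deriv (fun y : ℝ => -r * y ^ (-r - 1)) x := hev.deriv_eq
    have h3 : deriv (fun y : ℝ => -r * y ^ (-r - 1)) x
        = -r * ((-r - 1) * x ^ (-r - 1 - 1)) := by
      rw [deriv_const_mul _ ((Real.hasDerivAt_rpow_const
        (Or.inl (ne_of_gt hx))).differentiableAt),
        Real.deriv_rpow_const x (-r - 1)]
    simp only [Function.iterate_succ, Function.iterate_zero, Function.comp_apply, id_eq]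
    rw [h2, h3]
    have : -r * ((-r - 1) * x ^ (-r - 1 - 1)) = r * (r + 1) * x ^ (-r - 1 - 1) := by ring
    rw [this]
    positivity

-- helper: c * (x / c) ^ (-r) = c ^ (1 + r) * x ^ (-r)
lemma helper_scale {c x r : ℝ} (hc : 0 < c) (hx : 0 < x) :
    c * (x / c) ^ (-r) = c ^ (1 + r) * x ^ (-r) := by
  have h1 : (x / c) ^ (-r) = x ^ (-r) * c ^ r := by
    rw [Real.div_rpow hx.le hc.le, Real.rpow_neg hc.le r, div_eq_mul_inv, inv_inv]
  rw [h1, Real.rpow_add hc, Real.rpow_one]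
  ring

lemma key_pointwise {r x y a b : ℝ} (hr : 0 < r) (hx : 0 < x) (hy : 0 < y)
    (ha : 0 < a) (hb : 0 < b) :
    (x + y) ^ (-r) ≤ (a/(a+b))^(1+r) * x^(-r) + (b/(a+b))^(1+r) * y^(-r) ∧
    ((x + y) ^ (-r) = (a/(a+b))^(1+r) * x^(-r) + (b/(a+b))^(1+r) * y^(-r) ↔ b * x = a * y) := by
  have hab : 0 < a + b := by linarith
  set l : ℝ := a / (a + b) with hl
  set m : ℝ := b / (a + b) with hm
  have hl0 : 0 < l := div_pos ha hab
  have hm0 : 0 < m := div_pos hb hab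
  have hlm : l + m = 1 := by rw [hl, hm, ← add_div, div_self hab.ne']
  set u : ℝ := x / l with hu
  set v : ℝ := y / m with hv
  have hu0 : 0 < u := div_pos hx hl0
  have hv0 : 0 < v := div_pos hy hm0
  have hsum : l • u + m • v = x + y := by
    show l * u + m * v = x + y
    rw [hu, hv, mul_div_cancel₀ _ hl0.ne', mul_div_cancel₀ _ hm0.ne']
  have hRHS : l^(1+r) * x^(-r) + m^(1+r) * y^(-r)
      = l * u ^ (-r) + m * v ^ (-r) := by
    rw [hu, hv, helper_scale hl0 hx, helper_scale hm0 hy]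
  have huv : u = v ↔ b * x = a * y := by
    rw [hu, hv]
    rw [div_eq_div_iff hl0.ne' hm0.ne', hl, hm]
    constructor
    · intro h
      have h2 : x * (b / (a+b)) * (a+b) = y * (a / (a+b)) * (a+b) := by rw [h]
      field_simp at h2
      linarith
    · intro h
      field_simp
      linarith
  constructor
  · rw [hRHS, ← hsum]
    exact (strictConvexOn_rpow_neg hr).convexOn.2 (mem_Ioi.2 hu0) (mem_Ioi.2 hv0)
      hl0.le hm0.le hlm
  · rw [hRHS, ← hsum, ← huv]
    constructor
    · intro h
      by_contra hne
      exact absurd h (ne_of_lt ((strictConvexOn_rpow_neg hr).2 (mem_Ioi.2 hu0)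
        (mem_Ioi.2 hv0) hne hl0 hm0 hlm))
    · intro h
      rw [h, ← add_smul, hlm, one_smul, ← add_mul, hlm, one_mul]

instance (n : ℕ) : IsFiniteMeasure (sphereMeasure n) := by
  unfold sphereMeasure; infer_instance

lemma sphere_integrable {n : ℕ} {F : sphere (0 : EuclideanSpace ℝ (Fin n)) 1 → ℝ}
    (hF : Continuous F) : Integrable F (sphereMeasure n) :=
  hF.integrable_of_hasCompactSupport
    (IsCompact.of_isClosed_subset isCompact_univ (isClosed_tsupport F) (subset_univ _))

open scoped Pointwise in
lemma sphereMeasure_pos_of_isOpen {n : ℕ} (hn : 0 < n)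
    {U : Set (sphere (0 : EuclideanSpace ℝ (Fin n)) 1)} (hU : IsOpen U) (hne : U.Nonempty) :
    0 < sphereMeasure n U := by
  rw [sphereMeasure, Measure.toSphere_apply' _ hU.measurableSet]
  have hdim : (Module.finrank ℝ (EuclideanSpace ℝ (Fin n)) : ℝ≥0∞) ≠ 0 := by
    simp [finrank_euclideanSpace_fin, hn.ne']
  apply ENNReal.mul_pos hdim
  -- find an open subset of the cone
  obtain ⟨W, hW, hWU⟩ := isOpen_induced_iff.1 hU
  set f : EuclideanSpace ℝ (Fin n) → EuclideanSpace ℝ (Fin n) := fun x => ‖x‖⁻¹ • x with hf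
  have hfc : ContinuousOn f ({0}ᶜ : Set (EuclideanSpace ℝ (Fin n))) :=
    (continuousOn_id.norm.inv₀ (fun y hy => norm_ne_zero_iff.2 hy)).smul continuousOn_id
  set V : Set (EuclideanSpace ℝ (Fin n)) := (({0}ᶜ : Set _) ∩ ball 0 1) ∩ f ⁻¹' W with hV
  have hVopen : IsOpen V :=
    ContinuousOn.isOpen_inter_preimage (hfc.mono (inter_subset_left))
      (isOpen_compl_singleton.inter isOpen_ball) hW
  -- every point of V lies in the cone
  have hsub : V ⊆ Ioo (0:ℝ) 1 • (Subtype.val '' U) := by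
    rintro x ⟨⟨hx0, hxb⟩, hxW⟩
    have hx0' : x ≠ 0 := hx0
    have hnx : 0 < ‖x‖ := norm_pos_iff.2 hx0'
    have hfx : f x ∈ sphere (0 : EuclideanSpace ℝ (Fin n)) 1 := by
      simp only [mem_sphere_iff_norm, sub_zero, hf, norm_smul, norm_inv, norm_norm]
      field_simp
    refine ⟨‖x‖, ?_, f x, ?_, ?_⟩
    · exact ⟨hnx, by simpa [dist_eq_norm] using hxb⟩
    · exact ⟨⟨f x, hfx⟩, by rw [← hWU]; exact hxW, rfl⟩
    · show ‖x‖ • f x = x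
      rw [hf]
      rw [smul_smul, mul_inv_cancel₀ hnx.ne', one_smul]
  -- V is nonempty
  obtain ⟨u₀, hu₀⟩ := hne
  have hu₀n : ‖(u₀ : EuclideanSpace ℝ (Fin n))‖ = 1 := by
    simpa [dist_eq_norm] using u₀.2
  have hu₀0 : (u₀ : EuclideanSpace ℝ (Fin n)) ≠ 0 := by
    intro h; rw [h, norm_zero] at hu₀n; norm_num at hu₀n
  have hVne : V.Nonempty := by
    refine ⟨(1/2 : ℝ) • (u₀ : EuclideanSpace ℝ (Fin n)), ⟨⟨?_, ?_⟩, ?_⟩⟩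
    · simp only [mem_compl_iff, mem_singleton_iff]
      intro h
      rcases smul_eq_zero.1 h with h' | h'
      · norm_num at h'
      · exact hu₀0 h'
    · rw [mem_ball, dist_eq_norm, sub_zero, norm_smul, hu₀n]
      norm_num
    · have hnorm : ‖(1/2 : ℝ) • (u₀ : EuclideanSpace ℝ (Fin n))‖ = 1/2 := by
        rw [norm_smul, hu₀n]; norm_num
      show f _ ∈ W
      rw [hf]
      simp only [hnorm]
      rw [smul_smul]
      norm_num
      rw [← hWU] at hu₀
      exact hu₀
  exact ((hVopen.measure_pos volume hVne).trans_le (measure_mono hsub)).ne'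

lemma sphere_nonempty' {n : ℕ} (hn : 0 < n) :
    Nonempty (sphere (0 : EuclideanSpace ℝ (Fin n)) 1) := by
  haveI : Nonempty (Fin n) := ⟨⟨0, hn⟩⟩
  haveI : Nontrivial (EuclideanSpace ℝ (Fin n)) := inferInstance
  exact ((NormedSpace.sphere_nonempty (x := (0 : EuclideanSpace ℝ (Fin n)))).2
    zero_le_one).to_subtype

lemma sphere_integral_pos {n : ℕ} (hn : 0 < n)
    {F : sphere (0 : EuclideanSpace ℝ (Fin n)) 1 → ℝ}
    (hF : Continuous F) (hpos : ∀ u, 0 < F u) :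
    0 < ∫ u, F u ∂(sphereMeasure n) := by
  rw [integral_pos_iff_support_of_nonneg (fun u => (hpos u).le) (sphere_integrable hF)]
  have : Function.support F = univ := eq_univ_of_forall fun u => (hpos u).ne'
  rw [this]
  haveI := sphere_nonempty' hn
  exact sphereMeasure_pos_of_isOpen hn isOpen_univ univ_nonempty

lemma sphere_eq_zero_of_integral_zero {n : ℕ} (hn : 0 < n)
    {F : sphere (0 : EuclideanSpace ℝ (Fin n)) 1 → ℝ}
    (hF : Continuous F) (hnonneg : ∀ u, 0 ≤ F u)
    (hint : ∫ u, F u ∂(sphereMeasure n) = 0) : ∀ u, F u = 0 := by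
  have hae : F =ᵐ[sphereMeasure n] 0 :=
    (integral_eq_zero_iff_of_nonneg hnonneg (sphere_integrable hF)).1 hint
  by_contra hc
  push_neg at hc
  obtain ⟨u₀, hu₀⟩ := hc
  have hu₀pos : 0 < F u₀ := lt_of_le_of_ne (hnonneg u₀) (Ne.symm hu₀)
  set U := F ⁻¹' Ioi (F u₀ / 2) with hU
  have hUopen : IsOpen U := isOpen_Ioi.preimage hF
  have hUne : U.Nonempty := ⟨u₀, by simp [hU]; linarith⟩
  have hUpos : 0 < sphereMeasure n U := sphereMeasure_pos_of_isOpen hn hUopen hUne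
  have hzero : sphereMeasure n {u | F u ≠ 0} = 0 := by
    simpa [Filter.EventuallyEq, ae_iff] using hae
  have hsub : U ⊆ {u | F u ≠ 0} := fun u hu => by
    simp only [mem_setOf_eq]
    have : F u₀ / 2 < F u := hu
    intro h; rw [h] at this; linarith
  exact absurd (le_antisymm (hzero ▸ measure_mono hsub) zero_le) hUpos.ne'

-- chord positivity and continuity
lemma StarBody.chord_pos {n : ℕ} (K : StarBody n) (u) : 0 < K.chord u := by
  have h1 := K.radial_pos u
  have h2 := K.radial_pos (-u)
  unfold StarBody.chord
  linarith

lemma StarBody.chord_continuous {n : ℕ} (K : StarBody n) : Continuous K.chord := by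
  unfold StarBody.chord
  have hneg : Continuous fun u : sphere (0 : EuclideanSpace ℝ (Fin n)) 1 => -u := by
    apply Continuous.subtype_mk
    exact continuous_neg.comp continuous_subtype_val
  exact ((K.radial_continuous).add (K.radial_continuous.comp hneg)).div_const 2

/-- `L_p`-Brunn–Minkowski inequality for chord integrals:
`B_i(K +̌_p L)^{-p/(n-i)} ≥ B_i(K)^{-p/(n-i)} + B_i(L)^{-p/(n-i)}`, with equality iff
`K` and `L` have similar chord; here `K +̌_p L` is the `L_p`-chord addition. -/
theorem lp_brunn_minkowski_chordIntegral {n i : ℕ} (hi : i < n) {p : ℝ} (hp : 1 ≤ p)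
    (K L KL : StarBody n)
    (hKL : ∀ u, KL.chord u ^ (-p) = K.chord u ^ (-p) + L.chord u ^ (-p)) :
    chordIntegral n i KL ^ (-p / ((n : ℝ) - i)) ≥
      chordIntegral n i K ^ (-p / ((n : ℝ) - i)) +
        chordIntegral n i L ^ (-p / ((n : ℝ) - i)) ∧
    (chordIntegral n i KL ^ (-p / ((n : ℝ) - i)) =
        chordIntegral n i K ^ (-p / ((n : ℝ) - i)) +
          chordIntegral n i L ^ (-p / ((n : ℝ) - i)) ↔
      SimilarChord K L) := by
  have hn : 0 < n := Nat.pos_of_ne_zero (by omega)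
  set q : ℝ := (n : ℝ) - i with hqdef
  have hq : 0 < q := by
    have h1 : (i:ℝ) < (n:ℝ) := by exact_mod_cast hi
    rw [hqdef]; linarith
  have hp0 : 0 < p := lt_of_lt_of_le one_pos hp
  set r : ℝ := q / p with hrdef
  have hr : 0 < r := div_pos hq hp0
  have hKpos := K.chord_pos
  have hLpos := L.chord_pos
  have hHpos := KL.chord_pos
  have hxq : ∀ t : ℝ, 0 < t → (t ^ (-p)) ^ (-r) = t ^ q := by
    intro t ht
    rw [← Real.rpow_mul ht.le, show (-p) * (-r) = q by rw [hrdef]; field_simp]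
  have hinv : ∀ t : ℝ, 0 < t → (t ^ (-p)) ^ (-(1:ℝ)/p) = t := by
    intro t ht
    rw [← Real.rpow_mul ht.le, show (-p) * (-(1:ℝ)/p) = 1 by field_simp, Real.rpow_one]
  have hcontq : ∀ M : StarBody n, Continuous (fun u => M.chord u ^ q) := fun M =>
    M.chord_continuous.rpow_const (fun u => Or.inl (M.chord_pos u).ne')
  have hposq : ∀ (M : StarBody n) (u), 0 < M.chord u ^ q := fun M u =>
    Real.rpow_pos_of_pos (M.chord_pos u) q
  have hci : ∀ M : StarBody n, chordIntegral n i M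
      = (1 / (n:ℝ)) * ∫ u, M.chord u ^ q ∂(sphereMeasure n) := by
    intro M; unfold chordIntegral; rw [hqdef]
  have hn' : (0:ℝ) < 1 / (n:ℝ) := by
    have : (0:ℝ) < (n:ℝ) := by exact_mod_cast hn
    positivity
  have hcipos : ∀ M : StarBody n, 0 < chordIntegral n i M := by
    intro M
    rw [hci M]
    exact mul_pos hn' (sphere_integral_pos hn (hcontq M) (hposq M))
  set A := chordIntegral n i K with hAdef
  set B := chordIntegral n i L with hBdef
  set C := chordIntegral n i KL with hCdef
  have hA : 0 < A := hcipos K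
  have hB : 0 < B := hcipos L
  have hC : 0 < C := hcipos KL
  set a := A ^ (-p / q) with hadef
  set b := B ^ (-p / q) with hbdef
  have ha : 0 < a := Real.rpow_pos_of_pos hA _
  have hb : 0 < b := Real.rpow_pos_of_pos hB _
  have hab : 0 < a + b := by linarith
  have hepq : (-p / q) * (-r) = 1 := by rw [hrdef]; field_simp
  have hAa : A = a ^ (-r) := by
    rw [hadef, ← Real.rpow_mul hA.le, hepq, Real.rpow_one]
  have hBb : B = b ^ (-r) := by
    rw [hbdef, ← Real.rpow_mul hB.le, hepq, Real.rpow_one]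
  set lam1 := (a / (a + b)) ^ (1 + r) with hlam1
  set lam2 := (b / (a + b)) ^ (1 + r) with hlam2
  -- pointwise inequality and equality condition
  have hpt : ∀ u, KL.chord u ^ q ≤ lam1 * K.chord u ^ q + lam2 * L.chord u ^ q ∧
      (KL.chord u ^ q = lam1 * K.chord u ^ q + lam2 * L.chord u ^ q ↔
        b * K.chord u ^ (-p) = a * L.chord u ^ (-p)) := by
    intro u
    have hx := Real.rpow_pos_of_pos (hKpos u) (-p)
    have hy := Real.rpow_pos_of_pos (hLpos u) (-p)
    have h := key_pointwise hr hx hy ha hb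
    rw [← hKL u, hxq _ (hHpos u), hxq _ (hKpos u), hxq _ (hLpos u)] at h
    exact h
  -- integrate
  have hIK := sphere_integrable (hcontq K)
  have hIL := sphere_integrable (hcontq L)
  have hIH := sphere_integrable (hcontq KL)
  have hintRHS : Integrable (fun u => lam1 * K.chord u ^ q + lam2 * L.chord u ^ q)
      (sphereMeasure n) := (hIK.const_mul lam1).add (hIL.const_mul lam2)
  have hIRHS : (∫ u, (lam1 * K.chord u ^ q + lam2 * L.chord u ^ q) ∂(sphereMeasure n))
      = lam1 * (∫ u, K.chord u ^ q ∂(sphereMeasure n))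
        + lam2 * (∫ u, L.chord u ^ q ∂(sphereMeasure n)) := by
    rw [integral_add (hIK.const_mul lam1) (hIL.const_mul lam2),
      integral_const_mul, integral_const_mul]
  have hIle : (∫ u, KL.chord u ^ q ∂(sphereMeasure n))
      ≤ ∫ u, (lam1 * K.chord u ^ q + lam2 * L.chord u ^ q) ∂(sphereMeasure n) :=
    integral_mono hIH hintRHS (fun u => (hpt u).1)
  have hCle : C ≤ lam1 * A + lam2 * B := by
    rw [hCdef, hAdef, hBdef, hci KL, hci K, hci L]
    calc (1 / (n:ℝ)) * ∫ u, KL.chord u ^ q ∂(sphereMeasure n)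
        ≤ (1 / (n:ℝ)) * ∫ u, (lam1 * K.chord u ^ q + lam2 * L.chord u ^ q)
            ∂(sphereMeasure n) := by
          exact mul_le_mul_of_nonneg_left hIle hn'.le
      _ = lam1 * ((1 / (n:ℝ)) * ∫ u, K.chord u ^ q ∂(sphereMeasure n))
          + lam2 * ((1 / (n:ℝ)) * ∫ u, L.chord u ^ q ∂(sphereMeasure n)) := by
          rw [hIRHS]; ring
  -- algebraic combination
  have hscale : ∀ c : ℝ, 0 < c →
      (c / (a + b)) ^ (1 + r) * c ^ (-r) = c * (a + b) ^ (-(1 + r)) := by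
    intro c hc
    rw [Real.div_rpow hc.le hab.le, div_mul_eq_mul_div, ← Real.rpow_add hc,
      show 1 + r + -r = 1 by ring, Real.rpow_one, div_eq_mul_inv,
      ← Real.rpow_neg hab.le]
  have hsum_eq : lam1 * A + lam2 * B = (a + b) ^ (-r) := by
    rw [hAa, hBb, hlam1, hlam2, hscale a ha, hscale b hb, ← add_mul]
    nth_rewrite 1 [← Real.rpow_one (a + b)]
    rw [← Real.rpow_add hab, show 1 + -(1 + r) = -r by ring]
  have hCle' : C ≤ (a + b) ^ (-r) := hsum_eq ▸ hCle
  have hmain : a + b ≤ C ^ (-p / q) := by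
    have h1 : ((a + b) ^ (-r)) ^ (-p / q) ≤ C ^ (-p / q) :=
      Real.rpow_le_rpow_of_nonpos hC hCle' (by
        apply div_nonpos_of_nonpos_of_nonneg <;> [linarith; linarith])
    rwa [← Real.rpow_mul hab.le, show (-r) * (-p / q) = 1 by rw [hrdef]; field_simp,
      Real.rpow_one] at h1
  refine ⟨hmain, ?_, ?_⟩
  · -- equality implies similar chord
    intro heq
    have hCeq : C = (a + b) ^ (-r) := by
      have h2 : (C ^ (-p / q)) ^ (-r) = C := by
        rw [← Real.rpow_mul hC.le, hepq, Real.rpow_one]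
      rw [← h2, heq]
    have hint_eq : (∫ u, ((lam1 * K.chord u ^ q + lam2 * L.chord u ^ q)
        - KL.chord u ^ q) ∂(sphereMeasure n)) = 0 := by
      rw [integral_sub hintRHS hIH, hIRHS, sub_eq_zero]
      have h3 : lam1 * A + lam2 * B = C := by rw [hCeq, hsum_eq]
      rw [hAdef, hBdef, hCdef, hci K, hci L, hci KL] at h3
      have h4 := congrArg (fun t => (n:ℝ) * t) h3
      have hn0 : ((n:ℝ)) ≠ 0 := by positivity
      field_simp at h4
      linarith [h4]
    have hzero := sphere_eq_zero_of_integral_zero hn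
        (F := fun u => (lam1 * K.chord u ^ q + lam2 * L.chord u ^ q) - KL.chord u ^ q)
      (((continuous_const.mul (hcontq K)).add (continuous_const.mul (hcontq L))).sub
        (hcontq KL))
      (fun u => sub_nonneg.2 (hpt u).1) hint_eq
    have hptEq : ∀ u, b * K.chord u ^ (-p) = a * L.chord u ^ (-p) := by
      intro u
      exact (hpt u).2.1 (by linarith [hzero u, sub_eq_zero.1 (hzero u)])
    refine ⟨(a / b) ^ (-(1:ℝ)/p), Real.rpow_pos_of_pos (div_pos ha hb) _, fun u => ?_⟩
    have h5 : K.chord u ^ (-p) = (a / b) * L.chord u ^ (-p) := by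
      have := hptEq u
      field_simp
      linarith [this]
    have h6 : ((a / b) * L.chord u ^ (-p)) ^ (-(1:ℝ)/p)
        = (a / b) ^ (-(1:ℝ)/p) * L.chord u := by
      rw [Real.mul_rpow (div_pos ha hb).le (Real.rpow_pos_of_pos (hLpos u) _).le,
        hinv _ (hLpos u)]
    rw [← hinv _ (hKpos u), h5, h6]
  · -- similar chord implies equality
    rintro ⟨lam, hlam, hsim⟩
    set c : ℝ := (lam ^ (-p) + 1) ^ (-(1:ℝ)/p) with hcdef
    have hlamp : 0 < lam ^ (-p) := Real.rpow_pos_of_pos hlam _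
    have hc0 : 0 < c := Real.rpow_pos_of_pos (by linarith) _
    have hsimKL : ∀ u, KL.chord u = c * L.chord u := by
      intro u
      have h1 : KL.chord u ^ (-p) = (lam ^ (-p) + 1) * L.chord u ^ (-p) := by
        rw [hKL u, hsim u, Real.mul_rpow hlam.le (hLpos u).le]; ring
      have h2 : ((lam ^ (-p) + 1) * L.chord u ^ (-p)) ^ (-(1:ℝ)/p)
          = c * L.chord u := by
        rw [Real.mul_rpow (by linarith : (0:ℝ) ≤ lam ^ (-p) + 1)
          (Real.rpow_pos_of_pos (hLpos u) _).le, hinv _ (hLpos u), hcdef]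
      rw [← hinv _ (hHpos u), h1, h2]
    -- integrals scale
    have hIscale : ∀ (M : StarBody n) (t : ℝ), 0 < t → (∀ u, M.chord u = t * L.chord u) →
        chordIntegral n i M = t ^ q * B := by
      intro M t ht hMu
      rw [hci M, hBdef, hci L]
      have : (fun u => M.chord u ^ q) = fun u => t ^ q * L.chord u ^ q := by
        funext u
        rw [hMu u, Real.mul_rpow ht.le (hLpos u).le]
      rw [this, integral_const_mul]
      ring
    have hAeq : A = lam ^ q * B := hAdef ▸ hIscale K lam hlam hsim
    have hCeq : C = c ^ q * B := hCdef ▸ hIscale KL c hc0 hsimKL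
    have hqe : ∀ t : ℝ, 0 < t → (t ^ q) ^ (-p / q) = t ^ (-p) := by
      intro t ht
      rw [← Real.rpow_mul ht.le, show q * (-p / q) = -p by field_simp]
    have hBpow : 0 < B ^ (-p / q) := Real.rpow_pos_of_pos hB _
    have hcp : (c ^ (-p) : ℝ) = lam ^ (-p) + 1 := by
      rw [hcdef, ← Real.rpow_mul (by linarith : (0:ℝ) ≤ lam ^ (-p) + 1),
        show (-(1:ℝ)/p) * (-p) = 1 by field_simp, Real.rpow_one]
    have haval : a = lam ^ (-p) * b := by
      rw [hadef, hbdef, hAeq, Real.mul_rpow (Real.rpow_pos_of_pos hlam q).le hB.le,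
        hqe lam hlam]
    rw [hCeq, Real.mul_rpow (Real.rpow_pos_of_pos hc0 q).le hB.le, hqe c hc0, hcp,
      haval, hbdef]
    ring
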